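/- arXiv:2605.15143 — 5 statements merged into one kernel-verified Lean document; each statement's English description precedes it below -/
import Mathlib

section
/- Let L be a finite first-order language, M an L-structure, and v⃗ ∈ M^k a tuple whose neighbourhood N(v⃗) is finite. Then there exists a quantifier-free L-formula α with free variables among x_1,…,x_k such that for every L-structure M' and every tuple u⃗ ∈ M'^k, M' ⊨ α(u⃗) if and only if there is a local isomorphism from v⃗ to u⃗ (equivalently, if and only if qftype(M', u⃗) = qftype(M, v⃗)). In other words, the local-symmetry equivalence class of any tuple with finite neighbourhood is definable by a single quantifier-free formula. -/
open FirstOrder Language Substructure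

universe w

/-! Name every element of the neighbourhood `N(v)` by a term. A local isomorphism from `v` to `u`
exists iff `u` satisfies the same atomic formulas as `v`, the isomorphism being `t(v) ↦ t(u)`.
When `N(v)` and the language are finite, this atomic type is determined by finitely many of its
members, and their conjunction, each taken positively or negated according to its truth at `v`,
is the required formula. -/

namespace FirstOrder.Language

open Set Structure

variable {L : Language} {α : Type*} {M N : Type*} [L.Structure M] [L.Structure N]

theorem BoundedFormula.isQF_iInf {β : Type*} [Finite β] {n : ℕ} {f : β → L.BoundedFormula α n}
    (hf : ∀ b, (f b).IsQF) : (BoundedFormula.iInf f).IsQF := by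
  let _ := Fintype.ofFinite β
  suffices ∀ l : List (L.BoundedFormula α n), (∀ φ ∈ l, φ.IsQF) → (l.foldr (· ⊓ ·) ⊤).IsQF from
    this _ (by simpa using fun b => hf b)
  intro l hl
  induction l with
  | nil => exact .top
  | cons φ l ih => exact (hl φ (by simp)).inf (ih fun ψ hψ => hl ψ (by simp [hψ]))

noncomputable def Formula.literalAt (φ : L.Formula α) (v : α → M) : L.Formula α :=
  open Classical in if φ.Realize v then φ else φ.not

theorem BoundedFormula.IsQF.literalAt {φ : L.Formula α} (hφ : φ.IsQF) (v : α → M) :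
    (φ.literalAt v).IsQF := by
  unfold Formula.literalAt
  split_ifs
  exacts [hφ, hφ.not]

theorem Formula.realize_literalAt (φ : L.Formula α) (v : α → M) (u : α → N) :
    (φ.literalAt v).Realize u ↔ (φ.Realize v ↔ φ.Realize u) := by
  unfold Formula.literalAt
  split_ifs with h <;> simp [h]

theorem Term.realize_mem_closure_range (t : L.Term α) (v : α → M) :
    t.realize v ∈ closure L (range v) :=
  t.realize_mem v fun i => subset_closure (mem_range_self i)

theorem Substructure.mem_closure_range_iff_exists_term {v : α → M} {x : M} :
    x ∈ closure L (range v) ↔ ∃ t : L.Term α, t.realize v = x := by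
  refine ⟨fun hx => ?_, fun ⟨t, ht⟩ => ht ▸ t.realize_mem_closure_range v⟩
  obtain ⟨t, rfl⟩ := mem_closure_iff_exists_term.1 hx
  exact ⟨t.relabel (rangeSplitting v), by rw [Term.realize_relabel, comp_rangeSplitting]⟩

noncomputable def closureTerm (v : α → M) (x : closure L (range v)) : L.Term α :=
  (mem_closure_range_iff_exists_term.1 x.2).choose

@[simp]
theorem realize_closureTerm (v : α → M) (x : closure L (range v)) :
    (closureTerm v x).realize v = x :=
  (mem_closure_range_iff_exists_term.1 x.2).choose_spec

variable (L) in
structure AtomicallyEquivalent (v : α → M) (u : α → N) : Prop where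
  realize_eq_iff (s t : L.Term α) : s.realize v = t.realize v ↔ s.realize u = t.realize u
  relMap_iff {n : ℕ} (R : L.Relations n) (ts : Fin n → L.Term α) :
    RelMap R (fun i => (ts i).realize v) ↔ RelMap R (fun i => (ts i).realize u)

namespace AtomicallyEquivalent

variable {v : α → M} {u : α → N}

theorem symm (h : L.AtomicallyEquivalent v u) : L.AtomicallyEquivalent u v :=
  ⟨fun s t => (h.realize_eq_iff s t).symm, fun R ts => (h.relMap_iff R ts).symm⟩

/-- The map `t(v) ↦ t(u)`, well defined because `v` and `u` agree on equations between terms. -/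
noncomputable def transfer (_ : L.AtomicallyEquivalent v u) (x : closure L (range v)) :
    closure L (range u) :=
  ⟨(closureTerm v x).realize u, Term.realize_mem_closure_range _ u⟩

theorem coe_transfer_of_eq (h : L.AtomicallyEquivalent v u) {x : closure L (range v)}
    {t : L.Term α} (hx : (x : M) = t.realize v) : (h.transfer x : N) = t.realize u :=
  (h.realize_eq_iff _ _).1 (by rw [realize_closureTerm, hx])

theorem transfer_symm_transfer (h : L.AtomicallyEquivalent v u)
    (x : closure L (range v)) : h.symm.transfer (h.transfer x) = x :=
  Subtype.ext (h.symm.coe_transfer_of_eq rfl |>.trans (realize_closureTerm v x))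

noncomputable def localEquiv (h : L.AtomicallyEquivalent v u) :
    closure L (range v) ≃[L] closure L (range u) where
  toFun := h.transfer
  invFun := h.symm.transfer
  left_inv := h.transfer_symm_transfer
  right_inv := h.symm.transfer_symm_transfer
  map_fun' {n} f xs := Subtype.ext <|
    h.coe_transfer_of_eq (t := .func f fun i => closureTerm v (xs i))
      (by simp only [Term.realize, realize_closureTerm]; rfl)
  map_rel' {n} R xs := by
    have := h.relMap_iff R fun i => closureTerm v (xs i)
    simp only [realize_closureTerm] at this
    exact this.symm

theorem coe_localEquiv_apply_var (h : L.AtomicallyEquivalent v u) (i : α) :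
    (h.localEquiv ⟨v i, subset_closure (mem_range_self i)⟩ : N) = u i :=
  h.coe_transfer_of_eq (t := .var i) rfl

end AtomicallyEquivalent

theorem atomicallyEquivalent_of_localEquiv {v : α → M} {u : α → N}
    (β : closure L (range v) ≃[L] closure L (range u))
    (hβ : ∀ i, (β ⟨v i, subset_closure (mem_range_self i)⟩ : N) = u i) :
    L.AtomicallyEquivalent v u := by
  have key (t : L.Term α) : (β ⟨t.realize v, t.realize_mem_closure_range v⟩ : N) = t.realize u := by
    let v' : α → closure L (range v) := fun i => ⟨v i, subset_closure (mem_range_self i)⟩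
    have hv' : (⟨t.realize v, t.realize_mem_closure_range v⟩ : closure L (range v)) =
        t.realize v' := Subtype.ext (realize_term_substructure v' t)
    rw [hv', ← HomClass.realize_term, ← realize_term_substructure]
    exact congrArg t.realize (funext hβ)
  refine ⟨fun s t => ?_, fun R ts => ?_⟩
  · rw [← key s, ← key t, SetLike.coe_eq_coe, β.injective.eq_iff, Subtype.mk.injEq]
  · simp only [← key]
    exact (β.map_rel R fun i => ⟨(ts i).realize v, (ts i).realize_mem_closure_range v⟩).symm

theorem exists_localEquiv_iff_atomicallyEquivalent (v : α → M) (u : α → N) :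
    (∃ β : closure L (range v) ≃[L] closure L (range u),
      ∀ i, (β ⟨v i, subset_closure (mem_range_self i)⟩ : N) = u i) ↔
    L.AtomicallyEquivalent v u :=
  ⟨fun ⟨β, hβ⟩ => atomicallyEquivalent_of_localEquiv β hβ,
    fun h => ⟨h.localEquiv, h.coe_localEquiv_apply_var⟩⟩

variable (v : α → M)

variable (L) in
/-- Finitely many atomic facts about `v` (when `closure L (range v)` is finite) which, by induction
on terms, already determine its whole atomic type: which names of elements are equal, which name
each variable and each function value gets, and the relations among the names. -/
def atomicDiagram : Set (L.Formula α) :=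
  (range fun p : closure L (range v) × closure L (range v) =>
      (closureTerm v p.1).equal (closureTerm v p.2)) ∪
  (range fun i : α => (Term.var i).equal (closureTerm v ⟨v i, subset_closure (mem_range_self i)⟩)) ∪
  (range fun q : Σ f : (Σ n, L.Functions n), Fin f.1 → closure L (range v) =>
      (Term.func q.1.2 fun j => closureTerm v (q.2 j)).equal (closureTerm v (funMap q.1.2 q.2))) ∪
  (range fun q : Σ R : (Σ n, L.Relations n), Fin R.1 → closure L (range v) =>
      q.1.2.formula fun j => closureTerm v (q.2 j))

instance [Finite α] [Finite (Σ n, L.Functions n)] [Finite (Σ n, L.Relations n)]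
    [Finite (closure L (range v))] : Finite (L.atomicDiagram v) := by
  unfold atomicDiagram
  infer_instance

theorem isQF_of_mem_atomicDiagram {φ : L.Formula α} (hφ : φ ∈ L.atomicDiagram v) : φ.IsQF := by
  rcases hφ with ((⟨_, rfl⟩ | ⟨_, rfl⟩) | ⟨_, rfl⟩) | ⟨_, rfl⟩
  all_goals first
    | exact (BoundedFormula.IsAtomic.equal _ _).isQF
    | exact (BoundedFormula.IsAtomic.rel _ _).isQF

theorem atomicallyEquivalent_iff_forall_mem_atomicDiagram (u : α → N) :
    L.AtomicallyEquivalent v u ↔ ∀ φ ∈ L.atomicDiagram v, (φ.Realize v ↔ φ.Realize u) := by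
  refine ⟨fun h φ hφ => ?_, fun hD => ?_⟩
  · rcases hφ with ((⟨_, rfl⟩ | ⟨_, rfl⟩) | ⟨_, rfl⟩) | ⟨_, rfl⟩
    all_goals simp only [Formula.realize_equal, Formula.realize_rel]
    exacts [h.realize_eq_iff _ _, h.realize_eq_iff _ _, h.realize_eq_iff _ _, h.relMap_iff _ _]
  have hElem (x y : closure L (range v)) :
      x = y ↔ (closureTerm v x).realize u = (closureTerm v y).realize u := by
    simpa [Formula.realize_equal] using hD _ (.inl <| .inl <| .inl ⟨(x, y), rfl⟩)
  have hVar (i : α) :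
      u i = (closureTerm (L := L) v ⟨v i, subset_closure (mem_range_self i)⟩).realize u := by
    simpa [Formula.realize_equal] using hD _ (.inl <| .inl <| .inr ⟨i, rfl⟩)
  have hFun {n : ℕ} (f : L.Functions n) (xs : Fin n → closure L (range v)) :
      funMap f (fun j => (closureTerm v (xs j)).realize u) =
        (closureTerm v (funMap f xs)).realize u := by
    have := hD _ (.inl <| .inr ⟨⟨⟨n, f⟩, xs⟩, rfl⟩)
    simp only [Formula.realize_equal, Term.realize, realize_closureTerm] at this
    exact this.1 rfl
  have hRel {n : ℕ} (R : L.Relations n) (xs : Fin n → closure L (range v)) :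
      RelMap R (fun j => (xs j : M)) ↔ RelMap R (fun j => (closureTerm v (xs j)).realize u) := by
    simpa [Formula.realize_rel] using hD _ (.inr ⟨⟨⟨n, R⟩, xs⟩, rfl⟩)
  have hTerm (t : L.Term α) :
      t.realize u = (closureTerm v ⟨t.realize v, t.realize_mem_closure_range v⟩).realize u := by
    induction t with
    | var i => exact hVar i
    | func f ts ih =>
      simp only [Term.realize, ih]
      exact hFun f _
  refine ⟨fun s t => ?_, fun R ts => ?_⟩
  · rw [hTerm s, hTerm t, ← hElem, Subtype.mk.injEq]
  · have := hRel R fun i => ⟨(ts i).realize v, (ts i).realize_mem_closure_range v⟩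
    rwa [← funext fun i => hTerm (ts i)] at this

end FirstOrder.Language

/-- Over a finite language `L`, if a tuple `v` in an `L`-structure `M` has a
finite neighbourhood `N(v)` (the substructure generated by its components), then its
local-symmetry class is definable by a single quantifier-free formula: there is a
quantifier-free formula `α` such that for every `L`-structure `M'` and tuple `u`,
`M' ⊨ α(u)` iff there is a local isomorphism from `v` to `u`. -/
theorem exists_qf_formula_defining_local_symmetry_class {L : Language}
    [Finite (Σ n, L.Functions n)] [Finite (Σ n, L.Relations n)]
    {M : Type*} [L.Structure M] {k : ℕ} (v : Fin k → M)
    (hfin : ((closure L (Set.range v) : L.Substructure M) : Set M).Finite) :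
    ∃ α : L.Formula (Fin k), α.IsQF ∧
      ∀ (M' : Type w) [L.Structure M'] (u : Fin k → M'),
        α.Realize u ↔
          ∃ β : (closure L (Set.range v)) ≃[L] (closure L (Set.range u)),
            ∀ i : Fin k, (β ⟨v i, subset_closure (Set.mem_range_self i)⟩ : M') = u i := by
  have := hfin.to_subtype
  refine ⟨Formula.iInf fun φ : L.atomicDiagram v => φ.1.literalAt v,
    BoundedFormula.isQF_iInf fun φ => (isQF_of_mem_atomicDiagram v φ.2).literalAt v,
    fun M' _ u => ?_⟩
  rw [Formula.realize_iInf, exists_localEquiv_iff_atomicallyEquivalent,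
    atomicallyEquivalent_iff_forall_mem_atomicDiagram]
  simp only [Formula.realize_literalAt, Subtype.forall]
end

section
/- Let L be a finite first-order language and T a uniformly locally finite class of L-structures. Then for every quantifier-free L-formula φ with free variables among x_1,…,x_k, there exist finitely many quantifier-free L-formulas α_1,…,α_m with free variables among x_1,…,x_k such that: (i) each α_r defines a local-symmetry equivalence class realized in T, i.e., there are M_r ∈ T and v⃗_r ∈ M_r^k such that for every M ∈ T and u⃗ ∈ M^k, M ⊨ α_r(u⃗) if and only if there is a local isomorphism from v⃗_r to u⃗; and (ii) for every M ∈ T and u⃗ ∈ M^k, M ⊨ φ(u⃗) if and only if M ⊨ α_r(u⃗) for some r ∈ {1,…,m}. That is, over T every quantifier-free formula is equivalent to a finite disjunction of formulas each defining a single local-symmetry equivalence class. -/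
open FirstOrder Language Substructure

/-!
If every `k`-generated substructure in the class has at most `n` elements, then the isomorphism
type of `(closure (range v), v)` is coded by a structure on some `Fin m`, `m ≤ n`, with a
distinguished `k`-tuple; as `L` is finite there are finitely many such codes, hence finitely many
local-symmetry classes. Each class is defined by a quantifier-free formula: name every element of
the finite substructure generated by a representative `v` by a term, and take the finitely many
equalities and relations among these terms that hold at `v`, together with the negations of those
that fail. A quantifier-free formula is invariant under local isomorphisms, so it is the
disjunction of the defining formulas of the classes on which it holds.
-/

theorem exists_fin_reps_of_finite_code {P C : Type*} [Finite C] (R : P → P → Prop)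
    (code : P → C) (hcode : ∀ s t, code s = code t → R s t) {Q : P → Prop}
    (hQ : ∀ s t, R s t → Q s → Q t) :
    ∃ (m : ℕ) (rep : Fin m → P), ∀ t, Q t ↔ ∃ r, R (rep r) t := by
  let Sel := {c : C // ∃ s, Q s ∧ code s = c}
  choose rep hQrep hrep using fun c : Sel => c.2
  refine ⟨Nat.card Sel, fun r => rep ((Finite.equivFin Sel).symm r),
    fun t => ⟨fun ht => ?_, fun ⟨r, hr⟩ => hQ _ _ hr (hQrep _)⟩⟩
  refine ⟨Finite.equivFin Sel ⟨code t, t, ht, rfl⟩, hcode _ _ ?_⟩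
  simp only [Equiv.symm_apply_apply, hrep]

namespace FirstOrder.Language

universe w

variable {L : Language} {α : Type*} {M N : Type*} [L.Structure M] [L.Structure N]

namespace BoundedFormula

theorem IsQF.iInf {β : Type*} {n : ℕ} [Finite β] {f : β → L.BoundedFormula α n}
    (h : ∀ b, (f b).IsQF) : (iInf f).IsQF := by
  let _ := Fintype.ofFinite β
  suffices ∀ l : List (L.BoundedFormula α n), (∀ φ ∈ l, φ.IsQF) →
      (l.foldr (· ⊓ ·) ⊤).IsQF from this _ (by simp [h])
  intro l hl
  induction l with
  | nil => exact IsQF.top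
  | cons φ l ih => exact (hl φ (by simp)).inf (ih fun ψ hψ => hl ψ (by simp [hψ]))

theorem IsQF.realize_embedding_formula {F : Type*} [FunLike F M N] [EmbeddingLike F M N]
    [L.StrongHomClass F M N] {φ : L.Formula α} (h : φ.IsQF) (f : F) (v : α → M) :
    φ.Realize (f ∘ v) ↔ φ.Realize v := by
  simpa only [Formula.Realize, Subsingleton.elim (f ∘ default) default] using
    h.realize_embedding f (v := v) (xs := default)

end BoundedFormula

open BoundedFormula

variable (L) in
def LocallyIsomorphic (v : α → M) (u : α → N) : Prop :=
  ∃ β : closure L (Set.range v) ≃[L] closure L (Set.range u),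
    ∀ a, (β ⟨v a, subset_closure (Set.mem_range_self a)⟩ : N) = u a

theorem LocallyIsomorphic.realize_iff {v : α → M} {u : α → N} (h : LocallyIsomorphic L v u)
    {φ : L.Formula α} (hφ : φ.IsQF) : φ.Realize v ↔ φ.Realize u := by
  obtain ⟨β, hβ⟩ := h
  let gv : α → closure L (Set.range v) := fun a => ⟨v a, subset_closure (Set.mem_range_self a)⟩
  calc φ.Realize v ↔ φ.Realize ((closure L (Set.range v)).subtype ∘ gv) := Iff.rfl
    _ ↔ φ.Realize (β ∘ gv) := by
      rw [hφ.realize_embedding_formula, hφ.realize_embedding_formula]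
    _ ↔ φ.Realize ((closure L (Set.range u)).subtype ∘ β ∘ gv) :=
      (hφ.realize_embedding_formula _ _).symm
    _ ↔ φ.Realize u := Iff.of_eq (congrArg φ.Realize (funext hβ))

theorem locallyIsomorphic_of_terms {v : α → M} {u : α → N}
    (t : closure L (Set.range v) → L.Term α)
    (hinj : ∀ x y, (t x).realize u = (t y).realize u → x = y)
    (hgen : ∀ a, (t ⟨v a, subset_closure (Set.mem_range_self a)⟩).realize u = u a)
    (hfun : ∀ {l} (f : L.Functions l) (c : Fin l → closure L (Set.range v)),
      Structure.funMap f (fun i => (t (c i)).realize u) = (t (Structure.funMap f c)).realize u)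
    (hrel : ∀ {l} (R : L.Relations l) (c : Fin l → closure L (Set.range v)),
      Structure.RelMap R (fun i => (t (c i)).realize u) ↔ Structure.RelMap R c) :
    LocallyIsomorphic L v u := by
  let F : closure L (Set.range v) ↪[L] N :=
    ⟨⟨fun x => (t x).realize u, hinj⟩, fun f c => (hfun f c).symm, fun R c => hrel R c⟩
  let G := F.codRestrict (closure L (Set.range u))
    fun x => (t x).realize_mem u fun a => subset_closure (Set.mem_range_self a)
  have hsurj : Function.Surjective G := by
    rintro ⟨y, hy⟩
    have hle : closure L (Set.range u) ≤ F.toHom.range :=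
      closure_le.2 (Set.range_subset_iff.2 fun a => ⟨_, hgen a⟩)
    obtain ⟨x, hx⟩ := hle hy
    exact ⟨x, Subtype.ext hx⟩
  exact ⟨{ toEquiv := Equiv.ofBijective G ⟨G.injective, hsurj⟩
           map_fun' := G.map_fun', map_rel' := G.map_rel' }, hgen⟩

theorem exists_term_realize_eq {v : α → M} {x : M} (hx : x ∈ closure L (Set.range v)) :
    ∃ t : L.Term α, t.realize v = x := by
  obtain ⟨t, rfl⟩ := mem_closure_iff_exists_term.1 hx
  refine ⟨t.relabel (Set.rangeSplitting v), ?_⟩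
  rw [Term.realize_relabel, Function.comp_def]
  simp only [Set.apply_rangeSplitting]

open Classical in
noncomputable def Formula.diagram {ι : Type*} [Finite ι] (θ : ι → L.Formula α) (v : α → M) :
    L.Formula α :=
  Formula.iInf fun i => if (θ i).Realize v then θ i else (θ i).not

section Diagram

variable {ι : Type*} [Finite ι] {θ : ι → L.Formula α}

theorem Formula.realize_diagram (v : α → M) (u : α → N) :
    (diagram θ v).Realize u ↔ ∀ i, ((θ i).Realize u ↔ (θ i).Realize v) := by
  simp only [diagram, Formula.realize_iInf]
  refine forall_congr' fun i => ?_
  split_ifs with h <;> simp [h]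

theorem Formula.isQF_diagram (hθ : ∀ i, (θ i).IsQF) (v : α → M) : (diagram θ v).IsQF :=
  IsQF.iInf fun i => by split_ifs; exacts [hθ i, (hθ i).not]

end Diagram

theorem exists_isQF_realize_iff_locallyIsomorphic [Finite (Σ l, L.Functions l)]
    [Finite (Σ l, L.Relations l)] [Finite α] {v : α → M}
    (hv : (closure L (Set.range v) : Set M).Finite) :
    ∃ φ : L.Formula α, φ.IsQF ∧
      ∀ {N : Type w} [L.Structure N] (u : α → N), φ.Realize u ↔ LocallyIsomorphic L v u := by
  let X := closure L (Set.range v)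
  have : Finite X := hv.to_subtype
  choose t ht using fun x : X => exists_term_realize_eq x.2
  let gv : α → X := fun a => ⟨v a, subset_closure (Set.mem_range_self a)⟩
  let θ : (X × X) ⊕ α ⊕ (Σ f : Σ l, L.Functions l, Fin f.1 → X) ⊕
      (Σ R : Σ l, L.Relations l, Fin R.1 → X) → L.Formula α :=
    Sum.elim (fun p => (t p.1).equal (t p.2)) <|
      Sum.elim (fun a => (Term.var a).equal (t (gv a))) <|
        Sum.elim (fun c => (Term.func c.1.2 (t ∘ c.2)).equal (t (Structure.funMap c.1.2 c.2)))
          fun c => c.1.2.formula (t ∘ c.2)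
  have hθ : ∀ i, (θ i).IsQF := by
    rintro (_ | _ | _ | _)
    exacts [(IsAtomic.equal _ _).isQF, (IsAtomic.equal _ _).isQF, (IsAtomic.equal _ _).isQF,
      (IsAtomic.rel _ _).isQF]
  refine ⟨Formula.diagram θ v, Formula.isQF_diagram hθ v, fun u => ⟨fun h => ?_, fun h =>
    (h.realize_iff (Formula.isQF_diagram hθ v)).1
      ((Formula.realize_diagram v v).2 fun _ => Iff.rfl)⟩⟩
  simp only [Formula.realize_diagram, Sum.forall, θ, Sum.elim_inl, Sum.elim_inr,
    Formula.realize_equal, Formula.realize_rel, Term.realize_var, Term.realize_func,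
    Function.comp_apply, ht, gv, SetLike.coe_eq_coe, iff_true, Prod.forall, Sigma.forall] at h
  obtain ⟨hinj, hgen, hfun, hrel⟩ := h
  exact locallyIsomorphic_of_terms t (fun x y => (hinj x y).1) (fun a => (hgen a).symm)
    (fun f c => (hfun _ f c).2 rfl) (fun R c => hrel _ R c)

instance Structure.finite [Finite (Σ l, L.Functions l)] [Finite (Σ l, L.Relations l)]
    [Finite M] : Finite (L.Structure M) := by
  refine Finite.of_injective (fun S : L.Structure M =>
    (fun f : Σ l, L.Functions l => S.funMap f.2, fun R : Σ l, L.Relations l => S.RelMap R.2)) ?_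
  rintro ⟨F, R⟩ ⟨F', R'⟩ h
  simp only [Prod.mk.injEq, funext_iff, Sigma.forall] at h
  obtain ⟨hF, hR⟩ := h
  congr
  · funext l f x; exact hF l f x
  · funext l r x; exact hR l r x

variable (L α) in
/-- Codes for the isomorphism types of `(closure (range v), v)` with at most `n` elements:
a structure on `Fin m`, `m ≤ n`, with the image of `v`. -/
abbrev FinPresentation (n : ℕ) : Type _ :=
  Σ m : Fin (n + 1), L.Structure (Fin m) × (α → Fin m)

def FinPresentation.Presents {n : ℕ} (p : FinPresentation L α n) (v : α → M) : Prop :=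
  ∃ e : @Language.Equiv L (closure L (Set.range v)) (Fin p.1) _ p.2.1,
    ∀ a, e ⟨v a, subset_closure (Set.mem_range_self a)⟩ = p.2.2 a

theorem FinPresentation.Presents.locallyIsomorphic {n : ℕ} {p : FinPresentation L α n}
    {v : α → M} {u : α → N} (hv : p.Presents v) (hu : p.Presents u) :
    LocallyIsomorphic L v u := by
  let _ := p.2.1
  obtain ⟨e, he⟩ := hv
  obtain ⟨e', he'⟩ := hu
  refine ⟨e'.symm.comp e, fun a => ?_⟩
  rw [Equiv.comp_apply, he, ← he', Equiv.symm_apply_apply]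

theorem exists_presents {n : ℕ} {v : α → M} (hfin : (closure L (Set.range v) : Set M).Finite)
    (hcard : (closure L (Set.range v) : Set M).ncard ≤ n) :
    ∃ p : FinPresentation L α n, p.Presents v := by
  have := hfin.to_subtype
  let e := Finite.equivFin (closure L (Set.range v))
  have hm : Nat.card (closure L (Set.range v)) < n + 1 := by
    rw [← SetLike.coe_sort_coe, Nat.card_coe_set_eq]; omega
  exact ⟨⟨⟨_, hm⟩, e.inducedStructure, fun a => e ⟨v a, _⟩⟩, e.inducedStructureEquiv,
    fun _ => rfl⟩

end FirstOrder.Language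

/-- Over a finite language `L` and a uniformly locally finite class
`T = {T i}` of `L`-structures, every quantifier-free formula `φ` with free variables among
`x_1, …, x_k` is equivalent over the class to a finite disjunction of quantifier-free
formulas `α_1, …, α_m`, each of which defines a local-symmetry equivalence class realized
in the class: (i) each `α r` is quantifier-free and there are `i` and `v r : Fin k → T i`
such that for every member of the class and tuple `u` in it, `α r` is realized at `u` iff
there is a local isomorphism from `v r` to `u`; and (ii) `φ` is realized at a tuple `u`
of a member of the class iff some `α r` is realized at `u`. -/
theorem qf_formula_equiv_disjunction_of_class_definers {L : Language}
    [Finite (Σ n, L.Functions n)] [Finite (Σ n, L.Relations n)]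
    {ι : Type*} (T : ι → Type*) [∀ i, L.Structure (T i)]
    (hulf : ∀ d : ℕ, ∃ n : ℕ, ∀ (i : ι) (w : Fin d → T i),
      ((closure L (Set.range w) : L.Substructure (T i)) : Set (T i)).Finite ∧
        ((closure L (Set.range w) : L.Substructure (T i)) : Set (T i)).ncard ≤ n)
    {k : ℕ} (φ : L.Formula (Fin k)) (hφ : φ.IsQF) :
    ∃ (m : ℕ) (α : Fin m → L.Formula (Fin k)),
      (∀ r : Fin m, (α r).IsQF ∧
        ∃ (i : ι) (v : Fin k → T i),
          ∀ (j : ι) (u : Fin k → T j),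
            (α r).Realize u ↔
              ∃ β : (closure L (Set.range v)) ≃[L] (closure L (Set.range u)),
                ∀ a : Fin k,
                  (β ⟨v a, subset_closure (Set.mem_range_self a)⟩ : T j) = u a) ∧
      (∀ (j : ι) (u : Fin k → T j), φ.Realize u ↔ ∃ r : Fin m, (α r).Realize u) := by
  obtain ⟨n, hn⟩ := hulf k
  choose code hcode using fun s : Σ i, Fin k → T i =>
    exists_presents (hn s.1 s.2).1 (hn s.1 s.2).2
  obtain ⟨m, rep, hrep⟩ := exists_fin_reps_of_finite_code
    (fun s t : Σ i, Fin k → T i => LocallyIsomorphic L s.2 t.2) code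
    (fun s t h => (hcode s).locallyIsomorphic (h ▸ hcode t)) (Q := fun s => φ.Realize s.2)
    (fun s t h => (h.realize_iff hφ).1)
  choose α hαqf hα using fun s : Σ i, Fin k → T i =>
    exists_isQF_realize_iff_locallyIsomorphic (hn s.1 s.2).1
  exact ⟨m, fun r => α (rep r), fun r => ⟨hαqf _, (rep r).1, (rep r).2, fun j u => hα _ u⟩,
    fun j u => by simpa only [hα] using hrep ⟨j, u⟩⟩
end

section
/- Let L be a first-order language, M an L-structure, and v⃗ ∈ M^k a tuple whose neighbourhood N(v⃗) is finite, of cardinality n. Then every element u ∈ N(v⃗) is the value t^M(v⃗) of some L-term t with variables among x_1,…,x_k whose height is at most n. -/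
open FirstOrder Language Substructure

/-- The height of a term: a variable has height `0`, and an application of a function
symbol (including constants) has height one more than the maximum height of its
arguments (height `1` for constants). -/
def termHeight {L : Language} {α : Type*} : L.Term α → ℕ
  | .var _ => 0
  | .func _f ts => 1 + Finset.univ.sup fun i => termHeight (ts i)

/-- If the neighbourhood `N(v)` of a tuple `v : Fin k → M` is finite, of
cardinality `n`, then every element of `N(v)` is the value at `v` of some `L`-term with
variables among `x_1, …, x_k` of height at most `n`. -/
theorem mem_closure_realize_term_height_le {L : Language} {M : Type*} [L.Structure M]
    {k : ℕ} (v : Fin k → M)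
    (hfin : ((closure L (Set.range v) : L.Substructure M) : Set M).Finite)
    (u : M) (hu : u ∈ closure L (Set.range v)) :
    ∃ t : L.Term (Fin k),
      termHeight t ≤ ((closure L (Set.range v) : L.Substructure M) : Set M).ncard ∧
        t.realize v = u := by
  set C : Set M := ((closure L (Set.range v) : L.Substructure M) : Set M) with hC
  set n : ℕ := C.ncard with hn
  set S : ℕ → Set M := fun h => {x | ∃ t : L.Term (Fin k), termHeight t ≤ h ∧ t.realize v = x}
    with hS
  -- monotone
  have Smono : ∀ {h h' : ℕ}, h ≤ h' → S h ⊆ S h' := by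
    intro h h' hh x ⟨t, ht, hr⟩
    exact ⟨t, ht.trans hh, hr⟩
  -- range v ⊆ S 0
  have hrange : ∀ h, Set.range v ⊆ S h := by
    rintro h x ⟨i, rfl⟩
    exact ⟨.var i, by simp [termHeight], rfl⟩
  -- S h ⊆ C
  have hSC : ∀ h, S h ⊆ C := by
    have hterm : ∀ t : L.Term (Fin k), t.realize v ∈ closure L (Set.range v) := by
      intro t
      induction t with
      | var i => exact subset_closure ⟨i, rfl⟩
      | func f ts ih => exact (closure L (Set.range v)).fun_mem f _ ih
    rintro h x ⟨t, -, rfl⟩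
    exact hterm t
  -- stabilization
  have hstab : ∀ h, S (h + 1) ⊆ S h → C ⊆ S h := by
    intro h hsub
    have : closure L (Set.range v) ≤
        (⟨S h, by
          intro m f xs hxs
          refine hsub ?_
          choose ts hts hr using hxs
          refine ⟨.func f ts, ?_, by simp [Term.realize, hr]⟩
          simp only [termHeight, Nat.add_comm 1]
          exact Nat.add_le_add_right (Finset.sup_le fun i _ => hts i) 1⟩ :
          L.Substructure M) := closure_le.2 (hrange h)
    exact this
  -- main induction: C ⊆ S h ∨ h ≤ (S h).ncard
  have key : ∀ h : ℕ, C ⊆ S h ∨ h ≤ (S h).ncard := by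
    intro h
    induction h with
    | zero => exact Or.inr (Nat.zero_le _)
    | succ h ih =>
        rcases ih with ih | ih
        · exact Or.inl (ih.trans (Smono (Nat.le_succ h)))
        · by_cases hsub : S (h + 1) ⊆ S h
          · exact Or.inl ((hstab h hsub).trans (Smono (Nat.le_succ h)))
          · right
            have hss : S h ⊂ S (h + 1) := ⟨Smono (Nat.le_succ h), hsub⟩
            have hfin1 : (S (h + 1)).Finite := hfin.subset (hSC _)
            have := Set.ncard_lt_ncard hss hfin1
            omega
  have hCn : C ⊆ S n := by
    rcases key n with h | h
    · exact h
    · have hfinn : (S n).Finite := hfin.subset (hSC n)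
      have hle : (S n).ncard ≤ n := Set.ncard_le_ncard (hSC n) hfin
      have heq : S n = C := Set.eq_of_subset_of_ncard_le (hSC n) (hn ▸ h) hfin
      exact heq.ge
  obtain ⟨t, ht, hr⟩ := hCn hu
  exact ⟨t, ht, hr⟩
end

section
/- Let L be a first-order language, T a class of L-structures, and S ⊆ T a basis of rank k for T (with k ≥ 1). Then for every quantifier-free L-formula φ with free variables among x_1,…,x_k, the universal sentence ∀x_1 … ∀x_k. φ holds in every member of T if and only if it holds in every member of S; that is, (for all M ∈ T and all v⃗ ∈ M^k, M ⊨ φ(v⃗)) if and only if (for all S ∈ S and all u⃗ ∈ S^k, S ⊨ φ(u⃗)). -/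
open FirstOrder Language

universe u

/-- Let `T = {T i}_{i : ι}` be a class of `L`-structures and let
`S = {T j}_{j ∈ J}` (for `J : Set ι`) be a subclass that is a basis of rank `k ≥ 1` for
`T`: for every `i` and every `k`-tuple `v` over `T i` there are `j ∈ J` and an
`L`-embedding `f : T j ↪ T i` whose image contains every component of `v`. Then for
every quantifier-free formula `φ` with free variables among `x_1, …, x_k`, the universal
sentence `∀ x_1 … x_k, φ` holds in every member of `T` iff it holds in every member
of `S`. -/
theorem universal_qf_sentence_cutoff {L : Language} {ι : Type*}
    (T : ι → Type u) [∀ i, L.Structure (T i)] {k : ℕ} (hk : 1 ≤ k) (J : Set ι)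
    (hbasis : ∀ (i : ι) (v : Fin k → T i),
      ∃ j ∈ J, ∃ f : T j ↪[L] T i, ∀ a : Fin k, v a ∈ Set.range f)
    (φ : L.Formula (Fin k)) (hφ : φ.IsQF) :
    (∀ (i : ι) (v : Fin k → T i), φ.Realize v) ↔
      (∀ j ∈ J, ∀ u : Fin k → T j, φ.Realize u) := by
  constructor
  · intro h j _ u; exact h j u
  · intro h i v
    obtain ⟨j, hj, f, hf⟩ := hbasis i v
    choose u hu using hf
    have hv : v = f ∘ u := funext fun a => (hu a).symm
    rw [hv]
    have := (hφ.realize_embedding f (v := u) (xs := default)).mpr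
    have h2 := h j hj u
    unfold Formula.Realize at h2 ⊢
    have := this h2
    convert this using 2
end

section
/- Let P = {⟨T_i, ⟦-⟧_i⟩}_{i∈I} and P' = {⟨T_i, ⟦-⟧_i⟩}_{i∈I'} be parameterized programs with I ⊆ I' (so P ⊆ P'), such that every program of P' is a subprogram of some program of P. Fix a parameterized specification for P and equip each program of P' with the restricted specification. Then: (a) if every program of P' is safe, then every program of P is safe; and (b) conversely, if the initial condition init_i is extensible on every topology T_i with i ∈ I, then safety of every program of P implies safety of every program of P'. -/
open FirstOrder Language Substructure

universe u v

namespace ParamVerif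

variable {L : Language} {D : Type v}

/-- The neighbourhood of a node `a`: the substructure generated by `{a}`. -/
abbrev nbhd (L : Language) {M : Type u} [L.Structure M] (a : M) : L.Substructure M :=
  closure L ({a} : Set M)

/-- Restriction of a global state to the neighbourhood of a node, i.e. the induced
local state. -/
def locState (L : Language) {M : Type u} [L.Structure M] (μ : M → D) (a : M) :
    nbhd L a → D :=
  fun x => μ x

/-- The transition relation induced by a program: `μ →ₐ μ'` iff the pair of restricted
local states is in `⟦a⟧` and all variables outside `N(a)` are unchanged. -/
def Step {M : Type u} [L.Structure M]
    (prog : ∀ a : M, Set ((nbhd L a → D) × (nbhd L a → D))) (a : M)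
    (μ μ' : M → D) : Prop :=
  (locState L μ a, locState L μ' a) ∈ prog a ∧ ∀ u : M, u ∉ nbhd L a → μ u = μ' u

/-- A family of programs on the topologies `T i` is a parameterized program when local
isomorphisms between single nodes carry the transition relation of one node to that of
the other. -/
def IsParamProgram {ι : Type*} (T : ι → Type u) [∀ i, L.Structure (T i)]
    (prog : ∀ i, ∀ a : T i, Set ((nbhd L a → D) × (nbhd L a → D))) : Prop :=
  ∀ (i j : ι) (a : T i) (a' : T j) (β : nbhd L a ≃[L] nbhd L a'),
    (β ⟨a, subset_closure (Set.mem_singleton a)⟩ : T j) = a' →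
      prog i a =
        (fun p : (nbhd L a' → D) × (nbhd L a' → D) => (p.1 ∘ ⇑β, p.2 ∘ ⇑β)) '' prog j a'

/-- A family of node-indexed sets of local states (e.g. `init` or `error`) is a
parameterized specification component when it is symmetric under local isomorphisms. -/
def IsParamSpec {ι : Type*} (T : ι → Type u) [∀ i, L.Structure (T i)]
    (spec : ∀ i, ∀ a : T i, Set (nbhd L a → D)) : Prop :=
  ∀ (i j : ι) (a : T i) (a' : T j) (β : nbhd L a ≃[L] nbhd L a'),
    (β ⟨a, subset_closure (Set.mem_singleton a)⟩ : T j) = a' →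
      spec i a = (fun μ : nbhd L a' → D => μ ∘ ⇑β) '' spec j a'

/-- A program on `M` is safe w.r.t. `(init, error)` if no global state satisfying
`error` is reachable by a finite sequence of transitions from a global state
satisfying `init`. -/
def Safe {M : Type u} [L.Structure M]
    (prog : ∀ a : M, Set ((nbhd L a → D) × (nbhd L a → D)))
    (init error : ∀ a : M, Set (nbhd L a → D)) : Prop :=
  ¬ ∃ μ μ' : M → D,
      (∀ a : M, locState L μ a ∈ init a) ∧
      Relation.ReflTransGen (fun ν ν' : M → D => ∃ a : M, Step prog a ν ν') μ μ' ∧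
      (∃ a : M, locState L μ' a ∈ error a)

/-- An initial condition on a topology `M` is extensible if every global state on a
substructure `S` satisfying the restricted initial condition extends to a global state
on `M` satisfying the initial condition. -/
def Extensible {M : Type u} [L.Structure M] (init : ∀ a : M, Set (nbhd L a → D)) :
    Prop :=
  ∀ (S : L.Substructure M) (μ : S → D),
    (∀ (a : M) (_ : a ∈ S) (hle : nbhd L a ≤ S),
        (fun x : nbhd L a => μ ⟨(x : M), hle x.2⟩) ∈ init a) →
    ∃ μ' : M → D, (∀ a : M, locState L μ' a ∈ init a) ∧ ∀ x : S, μ' x = μ x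

/-- Auxiliary: equivalence between equal substructures. -/
noncomputable def equivOfEqAux {L : Language} {M : Type u} [L.Structure M]
    {S S' : L.Substructure M} (h : S = S') : S ≃[L] S' := by
  subst h; exact Language.Equiv.refl L S

lemma equivOfEqAux_coe {L : Language} {M : Type u} [L.Structure M]
    {S S' : L.Substructure M} (h : S = S') (x : S) :
    ((equivOfEqAux h x : S') : M) = (x : M) := by
  subst h; rfl

lemma nbhd_map_eq {L : Language} {M N : Type u} [L.Structure M] [L.Structure N]
    (f : M ↪[L] N) (a : M) :
    (nbhd L a).map f.toHom = nbhd L (f a) := by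
  rw [map_closure, Set.image_singleton]; rfl

/-- Auxiliary: the local isomorphism induced by an embedding. -/
noncomputable def nbhdEquiv {L : Language} {M N : Type u} [L.Structure M]
    [L.Structure N] (f : M ↪[L] N) (a : M) : nbhd L a ≃[L] nbhd L (f a) :=
  (equivOfEqAux (nbhd_map_eq f a)).comp (f.substructureEquivMap (nbhd L a))

lemma nbhdEquiv_coe {L : Language} {M N : Type u} [L.Structure M]
    [L.Structure N] (f : M ↪[L] N) (a : M) (x : nbhd L a) :
    ((nbhdEquiv f a x : nbhd L (f a)) : N) = f x := by
  simp only [nbhdEquiv, Equiv.comp_apply, equivOfEqAux_coe,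
    Embedding.substructureEquivMap_apply]

/-- Let `P'` be a parameterized program over the family `{T i}_{i : ι}` of
finite topologies with a parameterized specification `(init, error)`, and let
`P = {T i}_{i ∈ I}` (for `I : Set ι`) be a subfamily such that every program of `P'` is
a subprogram of some program of `P` (it embeds, as an `L`-structure, into some `T i`
with `i ∈ I`; by the symmetry conditions its program and specification are the
restrictions along the embedding). Then:
(a) if every program of `P'` is safe, then every program of `P` is safe; and
(b) if the initial condition is extensible on every topology of `P`, then safety of
every program of `P` implies safety of every program of `P'`. -/
theorem subprogram_safety_closure {L : Language} {D : Type v} [Nonempty D]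
    {ι : Type*} (T : ι → Type u) [∀ i, L.Structure (T i)] [∀ i, Finite (T i)]
    (prog : ∀ i, ∀ a : T i, Set ((nbhd L a → D) × (nbhd L a → D)))
    (hprog : IsParamProgram T prog)
    (init error : ∀ i, ∀ a : T i, Set (nbhd L a → D))
    (hinit : IsParamSpec T init) (herror : IsParamSpec T error)
    (I : Set ι)
    (hsub : ∀ i' : ι, ∃ i ∈ I, Nonempty (T i' ↪[L] T i)) :
    ((∀ i' : ι, Safe (prog i') (init i') (error i')) →
        ∀ i ∈ I, Safe (prog i) (init i) (error i)) ∧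
    ((∀ i ∈ I, Extensible (init i)) →
        (∀ i ∈ I, Safe (prog i) (init i) (error i)) →
        ∀ i' : ι, Safe (prog i') (init i') (error i')) := by
  constructor
  · intro h i _
    exact h i
  · intro hext hsafeI i'
    obtain ⟨i, hiI, ⟨f⟩⟩ := hsub i'
    rintro ⟨μ, μ', hinit', hreach, a₀, herr'⟩
    haveI : Nonempty (T i') := ⟨a₀⟩
    classical
    set g : T i → T i' := Function.invFun f with hg_def
    have hgf : ∀ y, g (f y) = y := fun y => Function.leftInverse_invFun f.injective y
    have hβtop : ∀ a : T i',
        ((nbhdEquiv f a) ⟨a, subset_closure (Set.mem_singleton a)⟩ : T i) = f a :=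
      fun a => nbhdEquiv_coe f a _
    have hprogeq : ∀ a : T i', prog i' a =
        (fun p : (nbhd L (f a) → D) × (nbhd L (f a) → D) =>
          (p.1 ∘ ⇑(nbhdEquiv f a), p.2 ∘ ⇑(nbhdEquiv f a))) '' prog i (f a) :=
      fun a => hprog i' i a (f a) (nbhdEquiv f a) (hβtop a)
    have hiniteq : ∀ a : T i', init i' a =
        (fun μ : nbhd L (f a) → D => μ ∘ ⇑(nbhdEquiv f a)) '' init i (f a) :=
      fun a => hinit i' i a (f a) (nbhdEquiv f a) (hβtop a)
    have herroreq : ∀ a : T i', error i' a =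
        (fun μ : nbhd L (f a) → D => μ ∘ ⇑(nbhdEquiv f a)) '' error i (f a) :=
      fun a => herror i' i a (f a) (nbhdEquiv f a) (hβtop a)
    set S : L.Substructure (T i) := Hom.range f.toHom with hS_def
    have hmemS : ∀ a : T i', f a ∈ S := fun a => Hom.mem_range.2 ⟨a, rfl⟩
    have hcond : ∀ (b : T i) (_ : b ∈ S) (hle : nbhd L b ≤ S),
        (fun x : nbhd L b => (fun z : S => μ (g z)) ⟨(x : T i), hle x.2⟩) ∈ init i b := by
      intro b hb hle
      obtain ⟨a, rfl⟩ := Hom.mem_range.1 hb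
      have h2 : locState L μ a ∈ init i' a := hinit' a
      rw [hiniteq a] at h2
      obtain ⟨q, hq, hqe⟩ := h2
      have : (fun x : nbhd L (f.toHom a) =>
          (fun z : S => μ (g z)) ⟨(x : T i), hle x.2⟩) = q := by
        funext x
        obtain ⟨y, rfl⟩ := EquivLike.surjective (nbhdEquiv f a) x
        have h1 := congrFun hqe y
        simp only [locState, Function.comp_apply] at h1
        show μ (g ((nbhdEquiv f a y : nbhd L (f a)) : T i)) = q (nbhdEquiv f a y)
        rw [nbhdEquiv_coe, hgf, ← h1]
      rw [this]
      exact hq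
    obtain ⟨μ₀, hμ₀init, hμ₀S⟩ := hext i hiI S (fun z : S => μ (g z)) hcond
    set lift : (T i' → D) → T i → D :=
      fun σ x => if h : x ∈ S then σ (g x) else μ₀ x with hlift_def
    have hliftf : ∀ (σ : T i' → D) (y : T i'), lift σ (f y) = σ y := by
      intro σ y
      simp only [hlift_def, dif_pos (hmemS y), hgf]
    have hliftμ : lift μ = μ₀ := by
      funext x
      by_cases h : x ∈ S
      · simp only [hlift_def, dif_pos h]
        exact (hμ₀S ⟨x, h⟩).symm
      · simp only [hlift_def, dif_neg h]
    have hloc : ∀ (σ : T i' → D) (a : T i') (q : nbhd L (f a) → D),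
        locState L σ a = q ∘ ⇑(nbhdEquiv f a) → locState L (lift σ) (f a) = q := by
      intro σ a q hq
      funext x
      obtain ⟨y, rfl⟩ := EquivLike.surjective (nbhdEquiv f a) x
      have h1 := congrFun hq y
      simp only [locState, Function.comp_apply] at h1 ⊢
      rw [nbhdEquiv_coe, hliftf, h1]
    have hstep : ∀ (a : T i') (σ σ' : T i' → D), Step (prog i') a σ σ' →
        Step (prog i) (f a) (lift σ) (lift σ') := by
      rintro a σ σ' ⟨hmem, hframe⟩
      rw [hprogeq a] at hmem
      obtain ⟨p, hp, hpe⟩ := hmem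
      have e1 : locState L (lift σ) (f a) = p.1 :=
        hloc σ a p.1 (congrArg Prod.fst hpe).symm
      have e2 : locState L (lift σ') (f a) = p.2 :=
        hloc σ' a p.2 (congrArg Prod.snd hpe).symm
      refine ⟨by rw [e1, e2]; exact hp, ?_⟩
      intro u hu
      by_cases h : u ∈ S
      · obtain ⟨y, rfl⟩ := Hom.mem_range.1 h
        have hy : y ∉ nbhd L a := by
          intro hy
          exact hu (by rw [← nbhd_map_eq]; exact ⟨y, hy, rfl⟩)
        show lift σ (f y) = lift σ' (f y)
        rw [hliftf, hliftf]
        exact hframe y hy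
      · simp only [hlift_def, dif_neg h]
    have hkey : ∀ σ σ' : T i' → D,
        Relation.ReflTransGen (fun ν ν' : T i' → D => ∃ a : T i', Step (prog i') a ν ν') σ σ' →
        Relation.ReflTransGen
          (fun ν ν' : T i → D => ∃ b : T i, Step (prog i) b ν ν') (lift σ) (lift σ') := by
      intro σ σ' hr
      induction hr with
      | refl => exact Relation.ReflTransGen.refl
      | tail _ h ih =>
        obtain ⟨a, ha⟩ := h
        exact ih.tail ⟨f a, hstep a _ _ ha⟩
    have hreach' := hkey μ μ' hreach
    have herr2 := herr'
    rw [herroreq a₀] at herr2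
    obtain ⟨q, hq, hqe⟩ := herr2
    have hql : locState L (lift μ') (f a₀) = q := hloc μ' a₀ q hqe.symm
    exact hsafeI i hiI ⟨lift μ, lift μ',
      by rw [hliftμ]; exact hμ₀init, hreach', f a₀, hql ▸ hq⟩

end ParamVerif
end
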